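/- Let G be a finite simple graph without isolated vertices, and let D be a minimum dominating set in G. Then there is a set T ⊆ V(G) ∖ D such that T is a dominating set in G and |T| ≤ α(G) + ⌊(γ(G) − 1)/2⌋. -/

import Mathlib

/-- `D` is a dominating set of `G`: every vertex lies in `D` or has a neighbor in `D`. -/
def IsDomSet {V : Type*} (G : SimpleGraph V) (D : Set V) : Prop :=
  ∀ v : V, v ∈ D ∨ ∃ u ∈ D, G.Adj u v

/-- `S` is an independent set of `G`. -/
def IsIndep {V : Type*} (G : SimpleGraph V) (S : Set V) : Prop :=
  S.Pairwise fun u v => ¬ G.Adj u v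

/-- The domination number of `G`: the minimum size of a dominating set. -/
noncomputable def gamma {V : Type*} (G : SimpleGraph V) : ℕ :=
  sInf {n | ∃ D : Set V, IsDomSet G D ∧ D.ncard = n}

/-- The independence number of `G`: the maximum size of an independent set. -/
noncomputable def alpha {V : Type*} (G : SimpleGraph V) : ℕ :=
  sSup {n | ∃ S : Set V, IsIndep G S ∧ S.ncard = n}

/-- The inverse domination number of `G`: the minimum size of a dominating set
disjoint from some minimum dominating set. -/
noncomputable def invGamma {V : Type*} (G : SimpleGraph V) : ℕ :=
  sInf {n | ∃ D T : Set V, IsDomSet G D ∧ D.ncard = gamma G ∧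
    IsDomSet G T ∧ D ∩ T = ∅ ∧ T.ncard = n}

/-- The independence number of the subgraph of `G` induced by `D`. -/
noncomputable def alphaOn {V : Type*} (G : SimpleGraph V) (D : Set V) : ℕ :=
  sSup {n | ∃ S : Set V, S ⊆ D ∧ IsIndep G S ∧ S.ncard = n}

/-- The number of edges of the subgraph of `G` induced by `D`. -/
noncomputable def edgeCountOn {V : Type*} (G : SimpleGraph V) (D : Set V) : ℕ :=
  {e ∈ G.edgeSet | ∀ v ∈ e, v ∈ D}.ncard

/-- `D` is an optimal dominating set: of minimum size; among those, `G[D]` has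
maximum independence number; and subject to that, `G[D]` has fewest edges. -/
def IsOptimalDomSet {V : Type*} (G : SimpleGraph V) (D : Set V) : Prop :=
  IsDomSet G D ∧ D.ncard = gamma G ∧
  (∀ D' : Set V, IsDomSet G D' → D'.ncard = gamma G → alphaOn G D' ≤ alphaOn G D) ∧
  (∀ D' : Set V, IsDomSet G D' → D'.ncard = gamma G →
    alphaOn G D' = alphaOn G D → edgeCountOn G D ≤ edgeCountOn G D')

/-- `w` is a private neighbor of `v` with respect to `D`: `w ∉ D` and `N(w) ∩ D = {v}`. -/
def IsPrivateNbr {V : Type*} (G : SimpleGraph V) (D : Set V) (v w : V) : Prop :=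
  w ∉ D ∧ G.Adj v w ∧ ∀ u ∈ D, G.Adj u w → u = v

/-- `R` is a partial independent set of representatives (partial ISR) for the family `P`:
an independent set consisting of distinct representatives of some subfamily of `P`. -/
def IsPartialISR {V : Type*} (G : SimpleGraph V) {n : ℕ} (P : Fin n → Set V)
    (R : Set V) : Prop :=
  IsIndep G R ∧ ∃ (J : Set (Fin n)) (x : Fin n → V),
    Set.InjOn x J ∧ (∀ j ∈ J, x j ∈ P j) ∧ R = x '' J

/-- `b(G)`: the largest number of vertices of an induced bipartite subgraph of `G`. -/
noncomputable def bipNum {V : Type*} (G : SimpleGraph V) : ℕ :=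
  sSup {n | ∃ B A : Set V, A ⊆ B ∧ IsIndep G A ∧ IsIndep G (B \ A) ∧ B.ncard = n}

/-!
Take a maximal independent set `K ⊆ D` and let `C = D \ K`. Grow an independent set `R` outside
`D` whose neighbors in `D` all lie in `C`, one "orphan" at a time, until `U = C \ N(R)` satisfies
`2|U| ≤ |C| ≤ γ - 1`. Then let `S` be a maximal independent set among the vertices outside
`D ∪ N[R]`, and `T` be `R ∪ S` together with one neighbor outside `D` of every vertex of `D` not
dominated by `R ∪ S`. Since `R ∪ S ∪ (K \ N(S))` is independent, `|T| ≤ α + |U|`.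
-/

section

variable {V : Type*} {G : SimpleGraph V}

def openNbhd (G : SimpleGraph V) (R : Set V) : Set V := {v | ∃ r ∈ R, G.Adj r v}

lemma openNbhd_mono {R R' : Set V} (h : R ⊆ R') : openNbhd G R ⊆ openNbhd G R' :=
  fun _ ⟨r, hr, hrv⟩ => ⟨r, h hr, hrv⟩

lemma IsIndep.insert {S : Set V} {x : V} (hS : IsIndep G S) (hx : ∀ s ∈ S, ¬ G.Adj s x) :
    IsIndep G (insert x S) :=
  Set.Pairwise.insert hS fun s hs _ => ⟨fun h => hx s hs h.symm, hx s hs⟩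

lemma IsIndep.union {S T : Set V} (hS : IsIndep G S) (hT : IsIndep G T)
    (h : ∀ s ∈ S, ∀ t ∈ T, ¬ G.Adj s t) : IsIndep G (S ∪ T) :=
  Set.pairwise_union.2 ⟨hS, hT, fun s hs t ht _ => ⟨h s hs t ht, fun h' => h s hs t ht h'.symm⟩⟩

lemma exists_maximal_indep_subset [Finite V] (Z : Set V) :
    ∃ S ⊆ Z, IsIndep G S ∧ ∀ y ∈ Z \ S, ∃ s ∈ S, G.Adj s y := by
  obtain ⟨S, -, ⟨hSZ, hS⟩, hmax⟩ :=
    Finite.exists_le_maximal (p := fun S : Set V => S ⊆ Z ∧ IsIndep G S) (a := ∅)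
      ⟨Set.empty_subset Z, Set.pairwise_empty _⟩
  refine ⟨S, hSZ, hS, fun y ⟨hyZ, hyS⟩ => ?_⟩
  by_contra! h
  exact hyS <| hmax ⟨Set.insert_subset hyZ hSZ, hS.insert h⟩ (Set.subset_insert y S)
    (Set.mem_insert y S)

lemma ncard_le_alpha [Finite V] {S : Set V} (hS : IsIndep G S) : S.ncard ≤ alpha G :=
  le_csSup ⟨Nat.card V, by rintro n ⟨T, -, rfl⟩; exact Set.ncard_le_card T⟩ ⟨S, hS, rfl⟩

lemma gamma_le_ncard {D : Set V} (hD : IsDomSet G D) : gamma G ≤ D.ncard :=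
  Nat.sInf_le ⟨D, hD, rfl⟩

lemma IsDomSet.sdiff_singleton {D : Set V} {v u : V} (hD : IsDomSet G D) (hvu : G.Adj v u)
    (hN : ∀ w ∉ D, ¬ G.Adj v w) : IsDomSet G (D \ {v}) := by
  have hN' : ∀ w, G.Adj v w → w ∈ D := fun w hvw => by_contra fun hw => hN w hw hvw
  intro w
  by_cases hwv : w = v
  · subst hwv
    exact Or.inr ⟨u, ⟨hN' u hvu, hvu.ne'⟩, hvu.symm⟩
  rcases hD w with hw | ⟨x, hx, hxw⟩
  · exact Or.inl ⟨hw, hwv⟩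
  by_cases hxv : x = v
  · subst hxv
    exact Or.inl ⟨hN' w hxw, hwv⟩
  · exact Or.inr ⟨x, ⟨hx, hxv⟩, hxw⟩

lemma IsDomSet.exists_adj_notMem_of_minimal [Finite V] {D : Set V} (hD : IsDomSet G D)
    (hDmin : ∀ E, IsDomSet G E → D.ncard ≤ E.ncard) (hiso : ∀ v, ∃ u, G.Adj v u)
    {v : V} (hv : v ∈ D) : ∃ u ∉ D, G.Adj v u := by
  by_contra! h
  obtain ⟨u, hvu⟩ := hiso v
  have hle := hDmin _ (hD.sdiff_singleton hvu h)
  have hlt := Set.ncard_sdiff_singleton_lt_of_mem hv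
  omega

lemma ncard_sdiff_le_ncard_sub_one [Finite V] {D K : Set V} (hKD : K ⊆ D)
    (hK : ∀ y ∈ D \ K, ∃ k ∈ K, G.Adj k y) : (D \ K).ncard ≤ D.ncard - 1 := by
  rcases D.eq_empty_or_nonempty with rfl | ⟨d, hd⟩
  · simp
  have hK0 : K.Nonempty := by
    by_cases hdK : d ∈ K
    exacts [⟨d, hdK⟩, (hK d ⟨hd, hdK⟩).imp fun _ h => h.1]
  have := Set.ncard_sdiff_add_ncard_of_subset hKD
  have := (Set.ncard_pos (Set.toFinite K)).2 hK0
  omega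

/-- With `U = C \ N(R)` and `|R| < |U|`, the set `(D \ U) ∪ R` is smaller than `D`, so it misses
some vertex `x`; `x ∉ D` because every vertex of `C` has a neighbor in `D \ C`. -/
lemma exists_orphan [Finite V] {D C R : Set V} (hD : IsDomSet G D)
    (hDmin : ∀ E, IsDomSet G E → D.ncard ≤ E.ncard) (hCD : C ⊆ D)
    (hC : ∀ c ∈ C, ∃ d ∈ D \ C, G.Adj d c) (hR : R.ncard < (C \ openNbhd G R).ncard) :
    ∃ x ∉ D, x ∉ R ∧ x ∉ openNbhd G R ∧ (∀ u ∈ D, G.Adj u x → u ∈ C \ openNbhd G R) ∧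
      ∃ u ∈ C \ openNbhd G R, G.Adj u x := by
  set U := C \ openNbhd G R
  have hUD : U ⊆ D := Set.sdiff_subset.trans hCD
  have hnotdom : ¬ IsDomSet G ((D \ U) ∪ R) := by
    intro hdom
    have hle := (hDmin _ hdom).trans (Set.ncard_union_le _ _)
    have hsub := Set.ncard_sdiff_add_ncard_of_subset hUD
    omega
  simp only [IsDomSet, not_forall, not_or, not_exists, not_and] at hnotdom
  obtain ⟨x, hxDUR, hxadj⟩ := hnotdom
  have hxU : ∀ u ∈ D, G.Adj u x → u ∈ U := fun u hu hux =>
    by_contra fun huU => hxadj u (Or.inl ⟨hu, huU⟩) hux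
  have hxD : x ∉ D := by
    intro hx
    have hxU' : x ∈ U := by_contra fun h => hxDUR (Or.inl ⟨hx, h⟩)
    obtain ⟨d, ⟨hd, hdC⟩, hdx⟩ := hC x hxU'.1
    exact hdC (hxU d hd hdx).1
  obtain ⟨u, hu, hux⟩ := (hD x).resolve_left hxD
  exact ⟨x, hxD, fun h => hxDUR (Or.inr h), fun ⟨r, hr, hrx⟩ => hxadj r (Or.inr hr) hrx, hxU,
    u, hxU u hu hux, hux⟩

/-- The orphan process: adding orphans to `R` one at a time keeps `|R| + |C \ N(R)| ≤ |C|` and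
strictly shrinks `C \ N(R)`, so it stops with `|C \ N(R)| ≤ |R|`. -/
lemma exists_indep_two_mul_ncard_sdiff_openNbhd_le [Finite V] {D C : Set V} (hD : IsDomSet G D)
    (hDmin : ∀ E, IsDomSet G E → D.ncard ≤ E.ncard) (hCD : C ⊆ D)
    (hC : ∀ c ∈ C, ∃ d ∈ D \ C, G.Adj d c) :
    ∃ R, Disjoint R D ∧ IsIndep G R ∧ (∀ r ∈ R, ∀ u ∈ D, G.Adj r u → u ∈ C) ∧
      2 * (C \ openNbhd G R).ncard ≤ C.ncard := by
  set P : Set V → Prop := fun R => Disjoint R D ∧ IsIndep G R ∧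
    (∀ r ∈ R, ∀ u ∈ D, G.Adj r u → u ∈ C) ∧ R.ncard + (C \ openNbhd G R).ncard ≤ C.ncard
  have hP0 : P ∅ := ⟨Set.empty_disjoint D, Set.pairwise_empty _, by simp,
    by simp [openNbhd]⟩
  obtain ⟨R, ⟨hRD, hR, hRC, hRcard⟩, hmin⟩ := Set.exists_min_image {R | P R}
    (fun R => (C \ openNbhd G R).ncard) (Set.toFinite _) ⟨∅, hP0⟩
  refine ⟨R, hRD, hR, hRC, ?_⟩
  suffices (C \ openNbhd G R).ncard ≤ R.ncard by omega
  by_contra! hlt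
  obtain ⟨x, hxD, hxR, hxN, hxU, u, hu, hux⟩ := exists_orphan hD hDmin hCD hC hlt
  have hshrink : C \ openNbhd G (insert x R) ⊂ C \ openNbhd G R :=
    (Set.ssubset_iff_of_subset (Set.sdiff_subset_sdiff_right
      (openNbhd_mono (Set.subset_insert x R)))).2
      ⟨u, hu, fun h => h.2 ⟨x, Set.mem_insert x R, hux.symm⟩⟩
  have hcard := Set.ncard_lt_ncard hshrink
  have hPx : P (insert x R) := by
    refine ⟨Set.disjoint_insert_left.2 ⟨hxD, hRD⟩, hR.insert fun r hr hrx => hxN ⟨r, hr, hrx⟩,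
      ?_, ?_⟩
    · rintro r (rfl | hr) w hw hrw
      exacts [(hxU w hw hrw.symm).1, hRC r hr w hw hrw]
    · rw [Set.ncard_insert_of_notMem hxR]
      omega
  have := hmin _ hPx
  omega

lemma isDomSet_union_image {D R S : Set V} {f : V → V} (hf : ∀ v ∈ D, G.Adj v (f v))
    (hS : ∀ y ∈ (D ∪ R ∪ openNbhd G R)ᶜ \ S, ∃ s ∈ S, G.Adj s y) :
    IsDomSet G (R ∪ S ∪ f '' (D \ (openNbhd G R ∪ openNbhd G S))) := by
  intro v
  by_cases hvR : v ∈ R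
  · exact Or.inl (Or.inl (Or.inl hvR))
  by_cases hvS : v ∈ S
  · exact Or.inl (Or.inl (Or.inr hvS))
  by_cases hNR : v ∈ openNbhd G R
  · obtain ⟨r, hr, hrv⟩ := hNR
    exact Or.inr ⟨r, Or.inl (Or.inl hr), hrv⟩
  by_cases hvD : v ∈ D
  · by_cases hNS : v ∈ openNbhd G S
    · obtain ⟨s, hs, hsv⟩ := hNS
      exact Or.inr ⟨s, Or.inl (Or.inr hs), hsv⟩
    · exact Or.inr ⟨f v, Or.inr ⟨v, ⟨hvD, by simp [hNR, hNS]⟩, rfl⟩, (hf v hvD).symm⟩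
  obtain ⟨s, hs, hsv⟩ := hS v ⟨by simp [hvD, hvR, hNR], hvS⟩
  exact Or.inr ⟨s, Or.inl (Or.inr hs), hsv⟩

lemma exists_isDomSet_subset_compl [Finite V] {D K R : Set V}
    (hext : ∀ v ∈ D, ∃ u ∉ D, G.Adj v u) (hKD : K ⊆ D) (hK : IsIndep G K)
    (hRD : Disjoint R D) (hR : IsIndep G R) (hRK : ∀ r ∈ R, ∀ k ∈ K, ¬ G.Adj r k) :
    ∃ T ⊆ Dᶜ, IsDomSet G T ∧ T.ncard ≤ alpha G + ((D \ K) \ openNbhd G R).ncard := by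
  choose! f hfD hf using hext
  obtain ⟨S, hSZ, hS, hSmax⟩ := exists_maximal_indep_subset (G := G) (D ∪ R ∪ openNbhd G R)ᶜ
  have hRSD : R ∪ S ⊆ Dᶜ := Set.union_subset hRD.subset_compl_right
    fun s hs => fun h => hSZ hs (Or.inl (Or.inl h))
  set U := D \ (openNbhd G R ∪ openNbhd G S)
  refine ⟨R ∪ S ∪ f '' U, Set.union_subset hRSD ?_, isDomSet_union_image hf hSmax, ?_⟩
  · rintro _ ⟨v, hv, rfl⟩
    exact hfD v hv.1
  have hW : IsIndep G (R ∪ S ∪ K \ openNbhd G S) := by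
    refine (hR.union hS fun r hr s hs hrs => hSZ hs (Or.inr ⟨r, hr, hrs⟩)).union
      (Set.Pairwise.mono Set.sdiff_subset hK) ?_
    rintro w (hw | hw) k ⟨hk, hkS⟩
    exacts [hRK w hw k hk, fun h => hkS ⟨w, hw, h⟩]
  have hWcard : (R ∪ S).ncard + (K \ openNbhd G S).ncard ≤ alpha G := by
    rw [← Set.ncard_union_eq (Set.disjoint_of_subset hRSD (Set.sdiff_subset.trans hKD)
      disjoint_compl_left)]
    exact ncard_le_alpha hW
  have hU : U ⊆ (K \ openNbhd G S) ∪ ((D \ K) \ openNbhd G R) := by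
    rintro v ⟨hvD, hvN⟩
    by_cases hvK : v ∈ K
    · exact Or.inl ⟨hvK, fun h => hvN (Or.inr h)⟩
    · exact Or.inr ⟨⟨hvD, hvK⟩, fun h => hvN (Or.inl h)⟩
  calc (R ∪ S ∪ f '' U).ncard ≤ (R ∪ S).ncard + U.ncard :=
        (Set.ncard_union_le _ _).trans (Nat.add_le_add_left (Set.ncard_image_le (Set.toFinite U)) _)
    _ ≤ (R ∪ S).ncard + ((K \ openNbhd G S).ncard + ((D \ K) \ openNbhd G R).ncard) :=
        Nat.add_le_add_left ((Set.ncard_le_ncard hU).trans (Set.ncard_union_le _ _)) _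
    _ ≤ alpha G + ((D \ K) \ openNbhd G R).ncard := by omega

end

theorem inverse_dom_le_alpha_add_half_gamma {V : Type*} [Fintype V] (G : SimpleGraph V)
    (hiso : ∀ v : V, ∃ u, G.Adj v u)
    (D : Set V) (hDdom : IsDomSet G D) (hDmin : D.ncard = gamma G) :
    ∃ T : Set V, T ⊆ Set.univ \ D ∧ IsDomSet G T ∧
      T.ncard ≤ alpha G + (gamma G - 1) / 2 := by
  have hDle : ∀ E, IsDomSet G E → D.ncard ≤ E.ncard := fun E hE => hDmin ▸ gamma_le_ncard hE
  obtain ⟨K, hKD, hK, hKmax⟩ := exists_maximal_indep_subset (G := G) D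
  obtain ⟨R, hRD, hR, hRC, hhalf⟩ := exists_indep_two_mul_ncard_sdiff_openNbhd_le hDdom hDle
    Set.sdiff_subset fun c hc => by
      obtain ⟨k, hk, hkc⟩ := hKmax c hc
      exact ⟨k, ⟨hKD hk, fun h => h.2 hk⟩, hkc⟩
  obtain ⟨T, hTD, hT, hTcard⟩ := exists_isDomSet_subset_compl
    (fun v hv => hDdom.exists_adj_notMem_of_minimal hDle hiso hv) hKD hK hRD hR
    fun r hr k hk hrk => (hRC r hr k (hKD hk) hrk).2 hk
  have hDK := ncard_sdiff_le_ncard_sub_one hKD hKmax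
  refine ⟨T, Set.compl_eq_univ_sdiff D ▸ hTD, hT, hTcard.trans (Nat.add_le_add_left ?_ _)⟩
  omega
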